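/- arXiv:2501.12623 — 5 statements merged into one kernel-verified Lean document; each statement's English description precedes it below -/
import Mathlib

section
/- For all integers n, r, d with 1 ≤ r ≤ n, the following identity holds in ℤ: d^r · Σ_{e=0}^{n−r} (−1)^e C(n,e) · Σ_{(a_1,…,a_r)∈ℕ^r, a_1+⋯+a_r = n−r−e} d^{a_1+⋯+a_r} = (−1)^{n−r} + Σ_{i=0}^{r−1} C(n,i) · C(n−i−1, r−i−1) · (d−1)^{n−i}. -/
open PowerSeries Finset

lemma card_adt (k n : ℕ) : (Finset.Nat.antidiagonalTuple k n).card = (k + n - 1).choose n := by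
  classical
  rw [← Finset.piAntidiag_univ_fin_eq_antidiagonalTuple n k, ← Finset.map_sym_eq_piAntidiag,
    Finset.card_map, Finset.sym_univ, Finset.card_univ, Sym.card_sym_eq_choose]
  simp

lemma inner_sum' (r m : ℕ) (d : ℤ) :
    ∑ a ∈ Finset.Nat.antidiagonalTuple r m, d ^ (∑ i, a i)
      = ((r + m - 1).choose m : ℤ) * d ^ m := by
  rw [Finset.sum_congr rfl (fun a ha => by rw [Finset.Nat.mem_antidiagonalTuple.mp ha]),
    Finset.sum_const, card_adt, nsmul_eq_mul]

lemma coeff_C_sub_X_pow (c : ℤ) (m e : ℕ) :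
    PowerSeries.coeff (R := ℤ) e ((PowerSeries.C (R := ℤ) c - PowerSeries.X) ^ m)
      = (-1) ^ e * (m.choose e : ℤ) * c ^ (m - e) := by
  have h1 : (PowerSeries.C (R := ℤ) c - PowerSeries.X : ℤ⟦X⟧)
      = PowerSeries.C (R := ℤ) (-1) * ((Polynomial.X + Polynomial.C (-c) : Polynomial ℤ) : ℤ⟦X⟧) := by
    push_cast
    simp [map_neg]
    ring
  rw [h1, mul_pow, ← map_pow, PowerSeries.coeff_C_mul, ← Polynomial.coe_pow,
    Polynomial.coeff_coe, Polynomial.coeff_X_add_C_pow]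
  rcases le_or_gt e m with h | h
  · obtain ⟨t, rfl⟩ : ∃ t, m = e + t := ⟨m - e, by omega⟩
    rw [Nat.add_sub_cancel_left, neg_pow, pow_add]
    have h2 : ((-1:ℤ))^t * (-1)^t = 1 := by rw [← pow_add]; exact Even.neg_one_pow ⟨t, rfl⟩
    linear_combination ((-1:ℤ))^e * c ^ t * (((e+t).choose e):ℤ) * h2
  · simp [Nat.choose_eq_zero_of_lt h]

lemma inv_mul_aux (i j : ℕ) :
    (1 - PowerSeries.X : ℤ⟦X⟧) ^ i * ((invOneSubPow ℤ (i + j)).val) = (invOneSubPow ℤ j).val := by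
  have hsplit : invOneSubPow ℤ (i + j) = invOneSubPow ℤ i * invOneSubPow ℤ j := by
    rw [invOneSubPow_eq_inv_one_sub_pow, invOneSubPow_eq_inv_one_sub_pow,
      invOneSubPow_eq_inv_one_sub_pow, pow_add]
  rw [← invOneSubPow_inv_eq_one_sub_pow, hsplit, Units.val_mul, ← mul_assoc,
    (invOneSubPow ℤ i).inv_val, one_mul]

lemma one_sub_pow_mul_inv_le (r i : ℕ) (hir : i ≤ r) :
    (1 - PowerSeries.X : ℤ⟦X⟧) ^ i * (invOneSubPow ℤ r).val = (invOneSubPow ℤ (r - i)).val := by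
  have h := inv_mul_aux i (r - i)
  rwa [show i + (r - i) = r by omega] at h

lemma one_sub_pow_mul_inv_ge (r i : ℕ) (hir : r ≤ i) :
    (1 - PowerSeries.X : ℤ⟦X⟧) ^ i * (invOneSubPow ℤ r).val
      = (1 - PowerSeries.X : ℤ⟦X⟧) ^ (i - r) := by
  have h : (1 - PowerSeries.X : ℤ⟦X⟧) ^ i
      = (1 - PowerSeries.X : ℤ⟦X⟧) ^ (i - r) * (1 - PowerSeries.X : ℤ⟦X⟧) ^ r := by
    rw [← pow_add]; congr 1; omega
  have h2 : (1 - PowerSeries.X : ℤ⟦X⟧) ^ r * (invOneSubPow ℤ r).val = 1 := by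
    rw [← invOneSubPow_inv_eq_one_sub_pow]; exact (invOneSubPow ℤ r).inv_val
  rw [h, mul_assoc, h2, mul_one]

lemma coeff_inv_one_sub (k j : ℕ) (hk : 0 < k) :
    PowerSeries.coeff (R := ℤ) j (invOneSubPow ℤ k).val = ((k - 1 + j).choose (k - 1) : ℤ) := by
  rw [invOneSubPow_val_eq_mk_sub_one_add_choose_of_pos ℤ k hk, PowerSeries.coeff_mk]

lemma coeff_one_sub_pow (m e : ℕ) :
    PowerSeries.coeff (R := ℤ) e ((1 - PowerSeries.X : ℤ⟦X⟧) ^ m) = (-1) ^ e * (m.choose e : ℤ) := by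
  have h := coeff_C_sub_X_pow 1 m e
  rw [map_one] at h
  simpa using h

lemma lemA (n r : ℕ) (d : ℤ) (hr : 1 ≤ r) :
    PowerSeries.coeff (R := ℤ) (n - r)
        ((PowerSeries.C (R := ℤ) d - PowerSeries.X) ^ n * (invOneSubPow ℤ r).val)
      = ∑ e ∈ Finset.range (n - r + 1),
          (-1 : ℤ) ^ e * (n.choose e : ℤ) * d ^ (n - e) *
            ((r - 1 + (n - r - e)).choose (r - 1) : ℤ) := by
  rw [PowerSeries.coeff_mul, Finset.Nat.sum_antidiagonal_eq_sum_range_succ_mk]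
  apply Finset.sum_congr rfl
  intro e _
  rw [coeff_C_sub_X_pow, coeff_inv_one_sub r _ hr]

lemma termB (n r i : ℕ) (d : ℤ) :
    (1 - PowerSeries.X : ℤ⟦X⟧) ^ i * (PowerSeries.C (R := ℤ) (d - 1)) ^ (n - i) *
        ((n.choose i : ℕ) : ℤ⟦X⟧)
      = PowerSeries.C (R := ℤ) ((n.choose i : ℤ) * (d - 1) ^ (n - i)) *
          (1 - PowerSeries.X : ℤ⟦X⟧) ^ i := by
  rw [map_mul, ← map_pow, ← map_natCast (PowerSeries.C (R := ℤ)) (n.choose i)]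
  ring

lemma lemB (n r : ℕ) (d : ℤ) (hr : 1 ≤ r) (hrn : r ≤ n) :
    PowerSeries.coeff (R := ℤ) (n - r)
        ((PowerSeries.C (R := ℤ) d - PowerSeries.X) ^ n * (invOneSubPow ℤ r).val)
      = (-1 : ℤ) ^ (n - r) +
          ∑ i ∈ Finset.range r,
            (n.choose i : ℤ) * ((n - i - 1).choose (r - i - 1) : ℤ) * (d - 1) ^ (n - i) := by
  have hsplit : (PowerSeries.C (R := ℤ) d - PowerSeries.X : ℤ⟦X⟧)
      = (1 - PowerSeries.X) + PowerSeries.C (R := ℤ) (d - 1) := by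
    rw [map_sub, map_one]; ring
  rw [hsplit, add_pow, Finset.sum_mul, map_sum]
  have hterm : ∀ i,
      PowerSeries.coeff (R := ℤ) (n - r)
          ((1 - PowerSeries.X : ℤ⟦X⟧) ^ i * (PowerSeries.C (R := ℤ) (d - 1)) ^ (n - i) *
            ((n.choose i : ℕ) : ℤ⟦X⟧) * (invOneSubPow ℤ r).val)
        = (n.choose i : ℤ) * (d - 1) ^ (n - i) *
            PowerSeries.coeff (R := ℤ) (n - r)
              ((1 - PowerSeries.X : ℤ⟦X⟧) ^ i * (invOneSubPow ℤ r).val) := by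
    intro i
    rw [termB n r i d, mul_assoc, PowerSeries.coeff_C_mul]
  rw [Finset.sum_congr rfl fun i _ => hterm i]
  rw [← Finset.sum_range_add_sum_Ico _ (show r ≤ n + 1 by omega)]
  have hlow : ∀ i ∈ Finset.range r,
      (n.choose i : ℤ) * (d - 1) ^ (n - i) *
          PowerSeries.coeff (R := ℤ) (n - r)
            ((1 - PowerSeries.X : ℤ⟦X⟧) ^ i * (invOneSubPow ℤ r).val)
        = (n.choose i : ℤ) * ((n - i - 1).choose (r - i - 1) : ℤ) * (d - 1) ^ (n - i) := by
    intro i hi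
    rw [Finset.mem_range] at hi
    rw [one_sub_pow_mul_inv_le r i (le_of_lt hi),
      coeff_inv_one_sub (r - i) (n - r) (by omega)]
    rw [show r - i - 1 + (n - r) = n - i - 1 by omega]
    ring
  have hhigh : ∑ i ∈ Finset.Ico r (n + 1),
      (n.choose i : ℤ) * (d - 1) ^ (n - i) *
          PowerSeries.coeff (R := ℤ) (n - r)
            ((1 - PowerSeries.X : ℤ⟦X⟧) ^ i * (invOneSubPow ℤ r).val)
        = (-1 : ℤ) ^ (n - r) := by
    rw [Finset.sum_eq_single_of_mem n (by simp [Finset.mem_Ico]; omega)]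
    · rw [one_sub_pow_mul_inv_ge r n hrn, coeff_one_sub_pow, Nat.choose_self,
        Nat.choose_self, Nat.sub_self, pow_zero]
      push_cast; ring
    · intro i hi hne
      rw [Finset.mem_Ico] at hi
      rw [one_sub_pow_mul_inv_ge r i hi.1, coeff_one_sub_pow,
        Nat.choose_eq_zero_of_lt (show i - r < n - r by omega)]
      push_cast; ring
  rw [Finset.sum_congr rfl hlow, hhigh, add_comm]


/-- The integer identity
`d^r · Σ_{e=0}^{n−r} (−1)^e C(n,e) · Σ_{a₁+⋯+a_r = n−r−e} d^{a₁+⋯+a_r}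
  = (−1)^{n−r} + Σ_{i=0}^{r−1} C(n,i) C(n−i−1, r−i−1) (d−1)^{n−i}`. -/
theorem stmt1 (n r : ℕ) (d : ℤ) (hr : 1 ≤ r) (hrn : r ≤ n) :
    d ^ r *
        ∑ e ∈ Finset.range (n - r + 1), (-1 : ℤ) ^ e * (n.choose e : ℤ) *
          ∑ a ∈ Finset.Nat.antidiagonalTuple r (n - r - e), d ^ (∑ i, a i) =
      (-1 : ℤ) ^ (n - r) +
        ∑ i ∈ Finset.range r,
          (n.choose i : ℤ) * ((n - i - 1).choose (r - i - 1) : ℤ) * (d - 1) ^ (n - i) := by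
  have key := (lemA n r d hr).symm.trans (lemB n r d hr hrn)
  rw [Finset.mul_sum]
  have hterm : ∀ e ∈ Finset.range (n - r + 1),
      d ^ r * ((-1 : ℤ) ^ e * (n.choose e : ℤ) *
          ∑ a ∈ Finset.Nat.antidiagonalTuple r (n - r - e), d ^ (∑ i, a i))
        = (-1 : ℤ) ^ e * (n.choose e : ℤ) * d ^ (n - e) *
            ((r - 1 + (n - r - e)).choose (r - 1) : ℤ) := by
    intro e he
    rw [Finset.mem_range] at he
    rw [inner_sum']
    rw [show r + (n - r - e) - 1 = r - 1 + (n - r - e) by omega]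
    rw [show (r - 1 + (n - r - e)).choose (n - r - e)
        = (r - 1 + (n - r - e)).choose (r - 1) by
      rw [← Nat.choose_symm (Nat.le_add_right (r - 1) (n - r - e))]
      congr 1
      omega]
    rw [show n - e = r + (n - r - e) by omega, pow_add]
    ring
  rw [Finset.sum_congr rfl hterm, key]
end

section
/- Let n ≥ r ≥ 1 be integers and let d be a rational number. In the ring ℚ⟦X⟧ of formal power series over ℚ, the coefficient of X^{n−r} in the series d^r · (1−X)^n · ((1−dX)^{−1})^{r+1} equals Σ_{i=0}^{r} C(n,i) · C(n−i, r−i) · (d−1)^{n−i}. -/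
open PowerSeries

private lemma upow_coeff (d : ℚ) : ∀ (k m : ℕ), k < m →
    PowerSeries.coeff (R := ℚ) m ((1 - PowerSeries.C (R := ℚ) d * PowerSeries.X) ^ k) = 0 := by
  intro k
  induction k with
  | zero => intro m hm; simp [PowerSeries.coeff_one, hm.ne']
  | succ k ih =>
    intro m hm
    obtain ⟨m, rfl⟩ : ∃ m', m = m' + 1 := ⟨m - 1, by omega⟩
    rw [pow_succ, mul_sub, mul_one, map_sub, ih _ (by omega), zero_sub, neg_eq_zero,
      show (1 - PowerSeries.C (R := ℚ) d * PowerSeries.X) ^ k * (PowerSeries.C (R := ℚ) d * PowerSeries.X)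
        = (PowerSeries.C (R := ℚ) d * (1 - PowerSeries.C (R := ℚ) d * PowerSeries.X) ^ k) * PowerSeries.X
        by ring,
      PowerSeries.coeff_succ_mul_X, PowerSeries.coeff_C_mul, ih _ (by omega), mul_zero]

/-- The coefficient of `X^(n-r)` in `d^r · (1−X)^n · ((1−dX)⁻¹)^(r+1)` equals
`Σ_{i=0}^{r} C(n,i) · C(n−i, r−i) · (d−1)^{n−i}`. -/
theorem stmt3 (n r : ℕ) (hr : 1 ≤ r) (hrn : r ≤ n) (d : ℚ) :
    PowerSeries.coeff (R := ℚ) (n - r)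
      (PowerSeries.C (R := ℚ) d ^ r * (1 - PowerSeries.X) ^ n *
        ((1 - PowerSeries.C (R := ℚ) d * PowerSeries.X)⁻¹) ^ (r + 1)) =
      ∑ i ∈ Finset.range (r + 1),
        (n.choose i : ℚ) * ((n - i).choose (r - i) : ℚ) * (d - 1) ^ (n - i) := by
  set u : ℚ⟦X⟧ := 1 - PowerSeries.C (R := ℚ) d * PowerSeries.X with hu
  have hcu : constantCoeff (R := ℚ) u = 1 := by simp [hu]
  have huinv : u * u⁻¹ = 1 := PowerSeries.mul_inv_cancel _ (by rw [hcu]; norm_num)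
  have hsplit : (1 - PowerSeries.X : ℚ⟦X⟧) = PowerSeries.C (R := ℚ) (d - 1) * PowerSeries.X + u := by
    rw [hu, map_sub, map_one]; ring
  have key : ∀ i ∈ Finset.range (n + 1),
      PowerSeries.coeff (R := ℚ) (n - r)
        (PowerSeries.C (R := ℚ) d ^ r *
          ((PowerSeries.C (R := ℚ) (d - 1) * PowerSeries.X) ^ i * u ^ (n - i) *
            ((n.choose i : ℕ) : ℚ⟦X⟧)) * (u⁻¹) ^ (r + 1)) =
      if i = n - r then d ^ r * (d - 1) ^ (n - r) * (n.choose (n - r) : ℚ) else 0 := by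
    intro i hi
    rw [Finset.mem_range] at hi
    have hrearr : PowerSeries.C (R := ℚ) d ^ r *
          ((PowerSeries.C (R := ℚ) (d - 1) * PowerSeries.X) ^ i * u ^ (n - i) *
            ((n.choose i : ℕ) : ℚ⟦X⟧)) * (u⁻¹) ^ (r + 1) =
        (PowerSeries.C (R := ℚ) (d ^ r * (d - 1) ^ i * (n.choose i : ℚ)) *
          (u ^ (n - i) * (u⁻¹) ^ (r + 1))) * PowerSeries.X ^ i := by
      rw [map_mul, map_mul, map_pow, map_pow, map_natCast, mul_pow]; ring
    rw [hrearr, PowerSeries.coeff_mul_X_pow']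
    by_cases hieq : i = n - r
    · subst hieq
      have hni : n - (n - r) = r := by omega
      have hur : u ^ r * (u⁻¹) ^ (r + 1) = u⁻¹ := by
        rw [pow_succ, ← mul_assoc, ← mul_pow, huinv, one_pow, one_mul]
      rw [if_pos le_rfl, if_pos rfl, hni, hur, Nat.sub_self,
        PowerSeries.coeff_zero_eq_constantCoeff, map_mul, PowerSeries.constantCoeff_C,
        PowerSeries.constantCoeff_inv, hcu]
      norm_num
    · rw [if_neg hieq]
      by_cases hile : i ≤ n - r
      · have hlt : i < n - r := lt_of_le_of_ne hile hieq
        have hpow : u ^ (n - i) * (u⁻¹) ^ (r + 1) = u ^ (n - i - (r + 1)) := by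
          have h1 : u ^ (n - i) = u ^ (r + 1) * u ^ (n - i - (r + 1)) := by
            rw [← pow_add]; congr 1; omega
          rw [h1, mul_comm (u ^ (r + 1)), mul_assoc, ← mul_pow, huinv, one_pow, mul_one]
        rw [if_pos hile, hpow, PowerSeries.coeff_C_mul,
          upow_coeff d _ _ (by omega), mul_zero]
      · rw [if_neg hile]
  calc (PowerSeries.coeff (R := ℚ) (n - r)) (PowerSeries.C (R := ℚ) d ^ r * (1 - PowerSeries.X) ^ n * (u⁻¹) ^ (r + 1)) = ∑ i ∈ Finset.range (n + 1), PowerSeries.coeff (R := ℚ) (n - r)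
          (PowerSeries.C (R := ℚ) d ^ r *
            ((PowerSeries.C (R := ℚ) (d - 1) * PowerSeries.X) ^ i * u ^ (n - i) *
              ((n.choose i : ℕ) : ℚ⟦X⟧)) * (u⁻¹) ^ (r + 1)) := by
        rw [hsplit, add_pow, Finset.mul_sum, Finset.sum_mul, map_sum]
    _ = ∑ i ∈ Finset.range (n + 1),
          if i = n - r then d ^ r * (d - 1) ^ (n - r) * (n.choose (n - r) : ℚ) else 0 :=
        Finset.sum_congr rfl key
    _ = d ^ r * (d - 1) ^ (n - r) * (n.choose (n - r) : ℚ) := by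
        rw [Finset.sum_ite_eq' (Finset.range (n + 1)) (n - r)]
        simp [Nat.lt_succ_iff, Nat.sub_le]
    _ = ∑ i ∈ Finset.range (r + 1),
        (n.choose i : ℚ) * ((n - i).choose (r - i) : ℚ) * (d - 1) ^ (n - i) := by
        rw [Nat.choose_symm hrn]
        have hterm : ∀ i ∈ Finset.range (r + 1),
            (n.choose i : ℚ) * ((n - i).choose (r - i) : ℚ) * (d - 1) ^ (n - i) =
            (n.choose r : ℚ) * (d - 1) ^ (n - r) *
              ((r.choose i : ℚ) * (d - 1) ^ (r - i)) := by
          intro i hi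
          rw [Finset.mem_range, Nat.lt_succ_iff] at hi
          have hcm : (n.choose i : ℚ) * ((n - i).choose (r - i) : ℚ)
              = (n.choose r : ℚ) * (r.choose i : ℚ) := by
            rw [← Nat.cast_mul, ← Nat.cast_mul, Nat.choose_mul hi]
          have hep : (d - 1) ^ (n - i) = (d - 1) ^ (n - r) * (d - 1) ^ (r - i) := by
            rw [← pow_add]; congr 1; omega
          rw [hcm, hep]; ring
        rw [Finset.sum_congr rfl hterm, ← Finset.mul_sum]
        have hbin : ∑ i ∈ Finset.range (r + 1), (r.choose i : ℚ) * (d - 1) ^ (r - i)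
            = d ^ r := by
          have := add_pow (1 : ℚ) (d - 1) r
          simp only [one_pow, one_mul] at this
          rw [show (1 : ℚ) + (d - 1) = d by ring] at this
          rw [this]
          exact Finset.sum_congr rfl fun i _ => by ring
        rw [hbin]; ring
end

section
/- Let n, r, d be integers with 1 ≤ r ≤ n and d ≥ 1, and let C(n,r;d) ∈ ℚ denote the coefficient of X^{n−r} in the formal power series d^r · (1−X)^n · ((1−dX)^{−1})^{r+1} ∈ ℚ⟦X⟧. Then C(n,r) · (d−1)^n ≤ C(n,r;d) ≤ C(n,r) · d^n. -/
open PowerSeries Finset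

-- coeff of (1 - C e * X)^k at m vanishes for m > k
lemma aux1 (e : ℚ) : ∀ (k m : ℕ), k < m → PowerSeries.coeff (R := ℚ) m ((1 - PowerSeries.C (R := ℚ) e * PowerSeries.X)^k) = 0 := by
  intro k
  induction k with
  | zero => intro m hm; rw [pow_zero, coeff_one, if_neg (by omega)]
  | succ k ih =>
    intro m hm
    rw [pow_succ, mul_sub, mul_one]
    rw [map_sub]
    have h1 : (1 - PowerSeries.C (R := ℚ) e * PowerSeries.X)^k * (PowerSeries.C (R := ℚ) e * PowerSeries.X)
        = PowerSeries.C (R := ℚ) e * ((1 - PowerSeries.C (R := ℚ) e * PowerSeries.X)^k * PowerSeries.X) := by ring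
    rw [h1, coeff_C_mul]
    obtain ⟨m', rfl⟩ : ∃ m', m = m' + 1 := ⟨m - 1, by omega⟩
    rw [coeff_succ_mul_X, ih m' (by omega), ih (m'+1) (by omega)]
    ring

lemma coeff_closed (n r : ℕ) (hr : 1 ≤ r) (hrn : r ≤ n) (d : ℚ) :
    PowerSeries.coeff (R := ℚ) (n - r)
      (PowerSeries.C (R := ℚ) d ^ r * (1 - PowerSeries.X) ^ n *
        ((1 - PowerSeries.C (R := ℚ) d * PowerSeries.X)⁻¹) ^ (r + 1))
    = (n.choose r : ℚ) * d ^ r * (d - 1) ^ (n - r) := by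
  set f : ℚ⟦X⟧ := 1 - PowerSeries.C (R := ℚ) d * PowerSeries.X with hf
  have hcc : PowerSeries.constantCoeff (R := ℚ) f ≠ 0 := by
    simp [hf, map_sub, constantCoeff_one]
  have hu : f * f⁻¹ = 1 := PowerSeries.mul_inv_cancel f hcc
  have hupow : ∀ k : ℕ, f ^ k * f⁻¹ ^ k = 1 := by
    intro k; rw [← mul_pow, hu, one_pow]
  have hcoeff0 : PowerSeries.coeff (R := ℚ) 0 f⁻¹ = 1 := by
    have := congrArg (PowerSeries.constantCoeff (R := ℚ)) hu
    rw [map_mul, map_one] at this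
    have hc1 : PowerSeries.constantCoeff (R := ℚ) f = 1 := by simp [hf, map_sub, constantCoeff_one]
    rw [hc1, one_mul] at this
    simpa [PowerSeries.coeff_zero_eq_constantCoeff] using this
  have hsplit : (1 - PowerSeries.X : ℚ⟦X⟧) = PowerSeries.C (R := ℚ) (d - 1) * PowerSeries.X + f := by
    rw [hf, map_sub, map_one]; ring
  rw [hsplit, add_pow, Finset.mul_sum, Finset.sum_mul, map_sum]
  rw [Finset.sum_eq_single (n - r)]
  · -- main term j = n - r
    have hfr : f ^ (n - (n - r)) * f⁻¹ ^ (r + 1) = f⁻¹ := by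
      have : n - (n - r) = r := by omega
      rw [this, pow_succ, ← mul_assoc, hupow r, one_mul]
    have harr : PowerSeries.C (R := ℚ) d ^ r *
          ((PowerSeries.C (R := ℚ) (d-1) * PowerSeries.X) ^ (n - r) * f ^ (n - (n-r)) * (n.choose (n-r) : ℚ⟦X⟧)) *
          f⁻¹ ^ (r + 1)
        = PowerSeries.C (R := ℚ) (d ^ r * (d-1)^(n-r) * (n.choose (n-r) : ℚ)) *
          (PowerSeries.X ^ (n - r) * (f ^ (n - (n-r)) * f⁻¹ ^ (r+1))) := by
      rw [map_mul, map_mul, map_pow, map_pow, mul_pow]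
      push_cast [PowerSeries.C_eq_algebraMap]
      ring
    rw [harr, hfr, PowerSeries.coeff_C_mul, PowerSeries.coeff_X_pow_mul', if_pos le_rfl,
      Nat.sub_self, hcoeff0, Nat.choose_symm hrn]
    ring
  · -- other terms vanish
    intro j hj hjne
    rw [Finset.mem_range] at hj
    have harr : PowerSeries.C (R := ℚ) d ^ r *
          ((PowerSeries.C (R := ℚ) (d-1) * PowerSeries.X) ^ j * f ^ (n - j) * (n.choose j : ℚ⟦X⟧)) *
          f⁻¹ ^ (r + 1)
        = PowerSeries.C (R := ℚ) (d ^ r * (d-1)^j * (n.choose j : ℚ)) *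
          (PowerSeries.X ^ j * (f ^ (n - j) * f⁻¹ ^ (r+1))) := by
      rw [map_mul, map_mul, map_pow, map_pow, mul_pow]
      push_cast [PowerSeries.C_eq_algebraMap]
      ring
    rw [harr, PowerSeries.coeff_C_mul, PowerSeries.coeff_X_pow_mul']
    rcases lt_or_gt_of_ne hjne with hlt | hgt
    · rw [if_pos (by omega)]
      have hk : n - j = (n - j - (r+1)) + (r + 1) := by omega
      have : f ^ (n - j) * f⁻¹ ^ (r+1) = f ^ (n - j - (r+1)) := by
        rw [hk, pow_add, mul_assoc, hupow (r+1), mul_one, Nat.add_sub_cancel]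
      rw [this, aux1 d _ _ (by omega), mul_zero]
    · rw [if_neg (by omega), mul_zero]
  · intro h
    exact absurd (Finset.mem_range.mpr (by omega)) h

/-- Bounds `C(n,r)·(d−1)^n ≤ C(n,r;d) ≤ C(n,r)·d^n` for the coefficient `C(n,r;d)`
of `X^(n−r)` in `d^r · (1−X)^n · ((1−dX)⁻¹)^(r+1)`. -/
theorem stmt4 (n r : ℕ) (d : ℤ) (hr : 1 ≤ r) (hrn : r ≤ n) (hd : 1 ≤ d) :
    let c : ℚ := PowerSeries.coeff (R := ℚ) (n - r)
      (PowerSeries.C (R := ℚ) (d : ℚ) ^ r * (1 - PowerSeries.X) ^ n *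
        ((1 - PowerSeries.C (R := ℚ) (d : ℚ) * PowerSeries.X)⁻¹) ^ (r + 1))
    (n.choose r : ℚ) * ((d : ℚ) - 1) ^ n ≤ c ∧ c ≤ (n.choose r : ℚ) * (d : ℚ) ^ n := by
  intro c
  have hc : c = (n.choose r : ℚ) * (d : ℚ) ^ r * ((d : ℚ) - 1) ^ (n - r) :=
    coeff_closed n r hr hrn (d : ℚ)
  rw [hc]
  have hD : (1 : ℚ) ≤ (d : ℚ) := by exact_mod_cast hd
  have h0 : (0 : ℚ) ≤ (d : ℚ) - 1 := by linarith
  have hdd : (d : ℚ) - 1 ≤ (d : ℚ) := by linarith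
  constructor
  · calc (n.choose r : ℚ) * ((d : ℚ) - 1) ^ n
        = (n.choose r : ℚ) * (((d : ℚ) - 1) ^ r * ((d : ℚ) - 1) ^ (n - r)) := by
          rw [← pow_add]; congr 2; omega
      _ ≤ (n.choose r : ℚ) * ((d : ℚ) ^ r * ((d : ℚ) - 1) ^ (n - r)) := by gcongr
      _ = (n.choose r : ℚ) * (d : ℚ) ^ r * ((d : ℚ) - 1) ^ (n - r) := by ring
  · calc (n.choose r : ℚ) * (d : ℚ) ^ r * ((d : ℚ) - 1) ^ (n - r)
        ≤ (n.choose r : ℚ) * (d : ℚ) ^ r * (d : ℚ) ^ (n - r) := by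
          gcongr
      _ = (n.choose r : ℚ) * (d : ℚ) ^ n := by rw [mul_assoc, ← pow_add]; congr 2; omega
end

section
/- Let n, r, d be positive integers. Work in Euclidean space ℝ^{n+r} with standard orthonormal basis e_1, …, e_{n+r}, and let Δ ⊂ ℝ^{n+r} be the convex hull of the finite set {0} ∪ {e_{n+j} : 1 ≤ j ≤ r} ∪ {d·e_i + e_{n+j} : 1 ≤ i ≤ n, 1 ≤ j ≤ r}. Then (n+r)! · vol(Δ) ≤ C(n+r−1, r−1) · d^n, where vol denotes Lebesgue measure on ℝ^{n+r}. -/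
open MeasureTheory

namespace Stmt5Aux

open Set Finset

/-- The "ordered simplex" `{0 ≤ u_0 ≤ u_1 ≤ ... ≤ c}`. -/
def Oset (m : ℕ) (c : ℝ) : Set (Fin m → ℝ) :=
  {u | (∀ i, 0 ≤ u i) ∧ (∀ i j : Fin m, i ≤ j → u i ≤ u j) ∧ (∀ i, u i ≤ c)}

lemma measurableSet_Oset (m : ℕ) (c : ℝ) : MeasurableSet (Oset m c) := by
  have h1 : MeasurableSet {u : Fin m → ℝ | ∀ i, 0 ≤ u i} := by
    rw [Set.setOf_forall]
    exact MeasurableSet.iInter fun i =>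
      measurableSet_le measurable_const (measurable_pi_apply i)
  have h2 : MeasurableSet {u : Fin m → ℝ | ∀ i j : Fin m, i ≤ j → u i ≤ u j} := by
    rw [Set.setOf_forall]
    refine MeasurableSet.iInter fun i => ?_
    rw [Set.setOf_forall]
    refine MeasurableSet.iInter fun j => ?_
    by_cases h : i ≤ j
    · simpa [h] using measurableSet_le (measurable_pi_apply i) (measurable_pi_apply j)
    · simp [h]
  have h3 : MeasurableSet {u : Fin m → ℝ | ∀ i, u i ≤ c} := by
    rw [Set.setOf_forall]
    exact MeasurableSet.iInter fun i =>
      measurableSet_le (measurable_pi_apply i) measurable_const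
  exact (h1.inter (h2.inter h3))

lemma measurable_lastpow (m k : ℕ) :
    Measurable fun u : Fin (m + 1) → ℝ => ENNReal.ofReal (u (Fin.last m) ^ k) :=
  ENNReal.measurable_ofReal.comp ((measurable_pi_apply (Fin.last m)).pow_const k)

/-- The key integral computation over the ordered simplex. -/
lemma ordLintegral (m : ℕ) : ∀ (k : ℕ) (c : ℝ), 0 ≤ c →
    (∫⁻ u : Fin (m + 1) → ℝ,
      (Oset (m + 1) c).indicator (fun u => ENNReal.ofReal (u (Fin.last m) ^ k)) u)
    = ENNReal.ofReal (c ^ (m + 1 + k) / ((m.factorial * (m + 1 + k) : ℕ) : ℝ)) := by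
  induction m with
  | zero =>
    intro k c hc
    have hF : Measurable fun u : Fin 1 → ℝ =>
        (Oset 1 c).indicator (fun u => ENNReal.ofReal (u (Fin.last 0) ^ k)) u :=
      (measurable_lastpow 0 k).indicator (measurableSet_Oset _ _)
    change ∫⁻ u : Fin 1 → ℝ, (Oset 1 c).indicator (fun u => ENNReal.ofReal (u (Fin.last 0) ^ k)) u = _
    erw [← ((volume_preserving_funUnique (Fin 1) ℝ).symm _).lintegral_comp hF]
    have key : ∀ t : ℝ,
        (Oset 1 c).indicator (fun u => ENNReal.ofReal (u (Fin.last 0) ^ k))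
          ((MeasurableEquiv.funUnique (Fin 1) ℝ).symm t)
        = (Set.Icc (0:ℝ) c).indicator (fun t => ENNReal.ofReal (t ^ k)) t := by
      intro t
      have hsymm : (MeasurableEquiv.funUnique (Fin 1) ℝ).symm t = fun _ => t := rfl
      rw [hsymm]
      by_cases ht : t ∈ Set.Icc (0:ℝ) c
      · rw [Set.indicator_of_mem ht,
          Set.indicator_of_mem (show (fun _ : Fin 1 => t) ∈ Oset 1 c from
            ⟨fun _ => ht.1, fun _ _ _ => le_refl _, fun _ => ht.2⟩)]
      · rw [Set.indicator_of_notMem ht, Set.indicator_of_notMem]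
        intro hmem
        exact ht ⟨hmem.1 (Fin.last 0), hmem.2.2 (Fin.last 0)⟩
    rw [lintegral_congr key, lintegral_indicator measurableSet_Icc]
    rw [← ofReal_integral_eq_lintegral_ofReal
      ((continuous_pow k).integrableOn_Icc)
      (by filter_upwards [ae_restrict_mem measurableSet_Icc] with t ht
          exact pow_nonneg ht.1 k)]
    rw [integral_Icc_eq_integral_Ioc, ← intervalIntegral.integral_of_le hc, integral_pow]
    congr 1
    rw [zero_pow (Nat.succ_ne_zero k)]
    push_cast
    simp [Nat.factorial]
    ring
  | succ m ih =>
    intro k c hc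
    have hvol : ∀ t : ℝ, 0 ≤ t → volume (Oset (m + 1) t)
        = ENNReal.ofReal (t ^ (m + 1) / ((m.factorial * (m + 1) : ℕ) : ℝ)) := by
      intro t ht
      have h0 := ih 0 t ht
      simp only [pow_zero, ENNReal.ofReal_one] at h0
      rw [lintegral_indicator_const (measurableSet_Oset _ _), one_mul] at h0
      simpa using h0
    have hF : Measurable fun u : Fin (m + 2) → ℝ =>
        (Oset (m + 2) c).indicator (fun u => ENNReal.ofReal (u (Fin.last (m + 1)) ^ k)) u :=
      (measurable_lastpow (m + 1) k).indicator (measurableSet_Oset _ _)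
    have hmp : MeasurePreserving
        (MeasurableEquiv.piFinSuccAbove (fun _ : Fin (m + 2) => ℝ) (Fin.last (m + 1))).symm
        (volume : Measure (ℝ × (Fin (m + 1) → ℝ))) volume :=
      (volume_preserving_piFinSuccAbove (fun _ : Fin (m + 2) => ℝ) (Fin.last (m + 1))).symm _
    rw [← hmp.lintegral_comp hF]
    rw [Measure.volume_eq_prod, lintegral_prod
      (fun z : ℝ × (Fin (m + 1) → ℝ) =>
        (Oset (m + 2) c).indicator (fun u => ENNReal.ofReal (u (Fin.last (m + 1)) ^ k))
          ((MeasurableEquiv.piFinSuccAbove (fun _ : Fin (m + 2) => ℝ)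
            (Fin.last (m + 1))).symm z))
      ((hF.comp (MeasurableEquiv.piFinSuccAbove (fun _ : Fin (m + 2) => ℝ)
        (Fin.last (m + 1))).symm.measurable).aemeasurable)]
    have happ : ∀ (t : ℝ) (w : Fin (m + 1) → ℝ),
        (MeasurableEquiv.piFinSuccAbove (fun _ : Fin (m + 2) => ℝ)
          (Fin.last (m + 1))).symm (t, w) = Fin.insertNth (α := fun _ => ℝ) (Fin.last (m + 1)) t w :=
      fun _ _ => rfl
    have hlastval : ∀ (t : ℝ) (w : Fin (m + 1) → ℝ),
        Fin.insertNth (α := fun _ => ℝ) (Fin.last (m + 1)) t w (Fin.last (m + 1)) = t :=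
      fun t w => Fin.insertNth_apply_same (α := fun _ => ℝ) (Fin.last (m + 1)) t w
    have hcsval : ∀ (t : ℝ) (w : Fin (m + 1) → ℝ) (j : Fin (m + 1)),
        Fin.insertNth (α := fun _ => ℝ) (Fin.last (m + 1)) t w (Fin.castSucc j) = w j := by
      intro t w j
      rw [← Fin.succAbove_last, Fin.insertNth_apply_succAbove (α := fun _ => ℝ)]
    have hinner : ∀ t : ℝ,
        (∫⁻ w : Fin (m + 1) → ℝ,
          (Oset (m + 2) c).indicator (fun u => ENNReal.ofReal (u (Fin.last (m + 1)) ^ k))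
            ((MeasurableEquiv.piFinSuccAbove (fun _ : Fin (m + 2) => ℝ)
              (Fin.last (m + 1))).symm (t, w)))
        = (Set.Icc (0:ℝ) c).indicator
            (fun t => ENNReal.ofReal (t ^ k * (t ^ (m + 1) / ((m.factorial * (m + 1) : ℕ) : ℝ)))) t := by
      intro t
      by_cases ht : t ∈ Set.Icc (0:ℝ) c
      · have hmem : ∀ w : Fin (m + 1) → ℝ,
            Fin.insertNth (α := fun _ => ℝ) (Fin.last (m + 1)) t w ∈ Oset (m + 2) c ↔ w ∈ Oset (m + 1) t := by
          intro w
          constructor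
          · intro h
            refine ⟨fun j => ?_, fun i j hij => ?_, fun j => ?_⟩
            · have := h.1 (Fin.castSucc j); rwa [hcsval] at this
            · have := h.2.1 (Fin.castSucc i) (Fin.castSucc j)
                (Fin.castSucc_le_castSucc_iff.2 hij)
              rwa [hcsval, hcsval] at this
            · have := h.2.1 (Fin.castSucc j) (Fin.last (m + 1)) (Fin.le_last _)
              rwa [hcsval, hlastval] at this
          · intro hw
            refine ⟨fun i => ?_, fun i j hij => ?_, fun i => ?_⟩
            · induction i using Fin.lastCases with
              | last => rw [hlastval]; exact ht.1
              | cast j => rw [hcsval]; exact hw.1 j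
            · induction j using Fin.lastCases with
              | last =>
                rw [hlastval]
                induction i using Fin.lastCases with
                | last => rw [hlastval]
                | cast i' => rw [hcsval]; exact hw.2.2 i'
              | cast j' =>
                induction i using Fin.lastCases with
                | last =>
                  have hj : Fin.castSucc j' = Fin.last (m + 1) :=
                    le_antisymm (Fin.le_last _) hij
                  rw [hj]
                | cast i' =>
                  rw [hcsval, hcsval]
                  exact hw.2.1 i' j' (Fin.castSucc_le_castSucc_iff.1 hij)
            · induction i using Fin.lastCases with
              | last => rw [hlastval]; exact ht.2
              | cast j => rw [hcsval]; exact le_trans (hw.2.2 j) ht.2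
        calc (∫⁻ w : Fin (m + 1) → ℝ,
              (Oset (m + 2) c).indicator (fun u => ENNReal.ofReal (u (Fin.last (m + 1)) ^ k))
                ((MeasurableEquiv.piFinSuccAbove (fun _ : Fin (m + 2) => ℝ)
                  (Fin.last (m + 1))).symm (t, w)))
            = ∫⁻ w : Fin (m + 1) → ℝ,
                (Oset (m + 1) t).indicator (fun _ => ENNReal.ofReal (t ^ k)) w := by
              apply lintegral_congr
              intro w
              rw [happ]
              by_cases hw : w ∈ Oset (m + 1) t
              · rw [Set.indicator_of_mem ((hmem w).2 hw), Set.indicator_of_mem hw, hlastval]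
              · rw [Set.indicator_of_notMem (fun h => hw ((hmem w).1 h)),
                  Set.indicator_of_notMem hw]
          _ = ENNReal.ofReal (t ^ k) * volume (Oset (m + 1) t) :=
              lintegral_indicator_const (measurableSet_Oset _ _) _
          _ = (Set.Icc (0:ℝ) c).indicator
                (fun t => ENNReal.ofReal (t ^ k * (t ^ (m + 1) / ((m.factorial * (m + 1) : ℕ) : ℝ)))) t := by
              rw [hvol t ht.1, Set.indicator_of_mem ht,
                ← ENNReal.ofReal_mul (pow_nonneg ht.1 k)]
      · rw [Set.indicator_of_notMem ht]
        have hzero : ∀ w : Fin (m + 1) → ℝ,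
            (Oset (m + 2) c).indicator (fun u => ENNReal.ofReal (u (Fin.last (m + 1)) ^ k))
              ((MeasurableEquiv.piFinSuccAbove (fun _ : Fin (m + 2) => ℝ)
                (Fin.last (m + 1))).symm (t, w)) = 0 := by
          intro w
          rw [happ]
          apply Set.indicator_of_notMem
          intro hmem2
          have h1 := hmem2.1 (Fin.last (m + 1))
          have h2 := hmem2.2.2 (Fin.last (m + 1))
          rw [hlastval] at h1 h2
          exact ht ⟨h1, h2⟩
        simp only [hzero, lintegral_zero]
    rw [lintegral_congr hinner, lintegral_indicator measurableSet_Icc]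
    have hD : (0:ℝ) < ((m.factorial * (m + 1) : ℕ) : ℝ) := by
      positivity
    rw [← ofReal_integral_eq_lintegral_ofReal
      (f := fun t => t ^ k * (t ^ (m + 1) / ((m.factorial * (m + 1) : ℕ) : ℝ)))
      (((continuous_pow k).mul ((continuous_pow (m + 1)).div_const _)).integrableOn_Icc)
      (by filter_upwards [ae_restrict_mem measurableSet_Icc] with t ht
          exact mul_nonneg (pow_nonneg ht.1 k)
            (div_nonneg (pow_nonneg ht.1 (m + 1)) hD.le))]
    have hintg : ∀ t : ℝ, t ^ k * (t ^ (m + 1) / ((m.factorial * (m + 1) : ℕ) : ℝ))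
        = t ^ (k + (m + 1)) * (((m.factorial * (m + 1) : ℕ) : ℝ))⁻¹ := by
      intro t; rw [pow_add]; ring
    simp_rw [hintg]
    rw [MeasureTheory.integral_mul_const, integral_Icc_eq_integral_Ioc,
      ← intervalIntegral.integral_of_le hc, integral_pow]
    congr 1
    rw [zero_pow (Nat.succ_ne_zero _)]
    have : ((m + 1).factorial * (m + 1 + 1 + k) : ℕ) = (m.factorial * (m + 1)) * (k + (m + 1) + 1) := by
      rw [Nat.factorial_succ]; ring
    rw [this]
    push_cast
    rw [sub_zero]
    have h1 : (0:ℝ) < (k:ℝ) + (m + 1) + 1 := by positivity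
    field_simp
    ring

/-- Volume of the ordered simplex. -/
lemma volume_Oset (m : ℕ) (c : ℝ) (hc : 0 ≤ c) :
    volume (Oset (m + 1) c) = ENNReal.ofReal (c ^ (m + 1) / ((m.factorial * (m + 1) : ℕ) : ℝ)) := by
  have h0 := ordLintegral m 0 c hc
  simp only [pow_zero, ENNReal.ofReal_one] at h0
  rw [lintegral_indicator_const (measurableSet_Oset _ _), one_mul] at h0
  simpa using h0

/-- The cumulative sum linear map. -/
noncomputable def cumsum (M : ℕ) : (Fin M → ℝ) →ₗ[ℝ] (Fin M → ℝ) :=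
  LinearMap.pi fun i => ∑ j ∈ Finset.Iic i, LinearMap.proj j

lemma cumsum_apply (M : ℕ) (x : Fin M → ℝ) (i : Fin M) :
    cumsum M x i = ∑ j ∈ Finset.Iic i, x j := by
  simp [cumsum, LinearMap.pi_apply, LinearMap.sum_apply, LinearMap.proj_apply]

lemma cumsum_det (M : ℕ) : LinearMap.det (cumsum M) = 1 := by
  rw [← LinearMap.det_toMatrix']
  have h : ∀ i j : Fin M, LinearMap.toMatrix' (cumsum M) i j = if j ≤ i then 1 else 0 := by
    intro i j
    rw [LinearMap.toMatrix'_apply, cumsum_apply]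
    simp only [Pi.single_apply]
    rw [Finset.sum_ite_eq' (Finset.Iic i) j (fun _ => (1:ℝ))]
    simp [Finset.mem_Iic]
  rw [Matrix.det_of_lowerTriangular]
  · simp [h]
  · intro i j hij
    have hij' : i < j := hij
    rw [h i j, if_neg (not_le.2 hij')]

lemma cumsum_measurePreserving (M : ℕ) :
    MeasurePreserving (cumsum M) (volume : Measure (Fin M → ℝ)) volume := by
  have hdet : LinearMap.det (cumsum M) ≠ 0 := by rw [cumsum_det]; norm_num
  refine ⟨(cumsum M).continuous_of_finiteDimensional.measurable, ?_⟩
  rw [Measure.map_linearMap_addHaar_eq_smul_addHaar volume hdet, cumsum_det]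
  simp

lemma cumsum_mem {M : ℕ} {x : Fin M → ℝ} {c : ℝ} (hx : ∀ i, 0 ≤ x i)
    (hs : ∑ i, x i ≤ c) : cumsum M x ∈ Oset M c := by
  refine ⟨fun i => ?_, fun i j hij => ?_, fun i => ?_⟩
  · rw [cumsum_apply]
    exact Finset.sum_nonneg fun j _ => hx j
  · rw [cumsum_apply, cumsum_apply]
    exact Finset.sum_le_sum_of_subset_of_nonneg (Finset.Iic_subset_Iic.2 hij)
      (fun j _ _ => hx j)
  · rw [cumsum_apply]
    exact le_trans
      (Finset.sum_le_sum_of_subset_of_nonneg (Finset.subset_univ _) (fun j _ _ => hx j)) hs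

lemma cumsum_last (M : ℕ) (x : Fin (M + 1) → ℝ) :
    cumsum (M + 1) x (Fin.last M) = ∑ i, x i := by
  rw [cumsum_apply]
  congr 1
  ext j
  simp [Finset.mem_Iic, Fin.le_last]

/-- The coordinate-splitting map. -/
def Gmap (a b : ℕ) : EuclideanSpace ℝ (Fin (a + 1 + (b + 1))) →
    (Fin (a + 1) → ℝ) × (Fin (b + 1) → ℝ) :=
  fun x => (fun i => x (Fin.castAdd (b + 1) i), fun j => x (Fin.natAdd (a + 1) j))

/-- The containing convex body, in product coordinates. -/
def Kprod (a b d : ℕ) : Set ((Fin (a + 1) → ℝ) × (Fin (b + 1) → ℝ)) :=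
  {p | (∀ i, 0 ≤ p.1 i) ∧ (∀ j, 0 ≤ p.2 j) ∧ (∑ j, p.2 j) ≤ 1 ∧
    (∑ i, p.1 i) ≤ (d : ℝ) * ∑ j, p.2 j}

/-- Image of `Kprod` under blockwise cumulative sums. -/
def Stilde (a b d : ℕ) : Set ((Fin (a + 1) → ℝ) × (Fin (b + 1) → ℝ)) :=
  {p | p.2 ∈ Oset (b + 1) 1 ∧ (∀ i, 0 ≤ p.1 i) ∧
    (∀ i i' : Fin (a + 1), i ≤ i' → p.1 i ≤ p.1 i') ∧
    (∀ i, p.1 i ≤ (d : ℝ) * p.2 (Fin.last b))}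

lemma measurableSet_Kprod (a b d : ℕ) : MeasurableSet (Kprod a b d) := by
  have m1 : MeasurableSet {p : (Fin (a + 1) → ℝ) × (Fin (b + 1) → ℝ) | ∀ i, 0 ≤ p.1 i} := by
    rw [Set.setOf_forall]
    exact MeasurableSet.iInter fun i =>
      measurableSet_le measurable_const ((measurable_pi_apply i).comp' measurable_fst)
  have m2 : MeasurableSet {p : (Fin (a + 1) → ℝ) × (Fin (b + 1) → ℝ) | ∀ j, 0 ≤ p.2 j} := by
    rw [Set.setOf_forall]
    exact MeasurableSet.iInter fun j =>
      measurableSet_le measurable_const ((measurable_pi_apply j).comp' measurable_snd)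
  have hs2 : Measurable fun p : (Fin (a + 1) → ℝ) × (Fin (b + 1) → ℝ) => ∑ j, p.2 j :=
    Finset.measurable_sum _ fun j _ => (measurable_pi_apply j).comp' measurable_snd
  have hs1 : Measurable fun p : (Fin (a + 1) → ℝ) × (Fin (b + 1) → ℝ) => ∑ i, p.1 i :=
    Finset.measurable_sum _ fun i _ => (measurable_pi_apply i).comp' measurable_fst
  have m3 : MeasurableSet {p : (Fin (a + 1) → ℝ) × (Fin (b + 1) → ℝ) | (∑ j, p.2 j) ≤ 1} :=
    measurableSet_le hs2 measurable_const
  have m4 : MeasurableSet {p : (Fin (a + 1) → ℝ) × (Fin (b + 1) → ℝ) |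
      (∑ i, p.1 i) ≤ (d : ℝ) * ∑ j, p.2 j} :=
    measurableSet_le hs1 (measurable_const.mul hs2)
  exact m1.inter (m2.inter (m3.inter m4))

lemma measurableSet_Stilde (a b d : ℕ) : MeasurableSet (Stilde a b d) := by
  have m1 : MeasurableSet {p : (Fin (a + 1) → ℝ) × (Fin (b + 1) → ℝ) |
      p.2 ∈ Oset (b + 1) 1} := (measurableSet_Oset _ _).preimage measurable_snd
  have m2 : MeasurableSet {p : (Fin (a + 1) → ℝ) × (Fin (b + 1) → ℝ) | ∀ i, 0 ≤ p.1 i} := by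
    rw [Set.setOf_forall]
    exact MeasurableSet.iInter fun i =>
      measurableSet_le measurable_const ((measurable_pi_apply i).comp' measurable_fst)
  have m3 : MeasurableSet {p : (Fin (a + 1) → ℝ) × (Fin (b + 1) → ℝ) |
      ∀ i i' : Fin (a + 1), i ≤ i' → p.1 i ≤ p.1 i'} := by
    rw [Set.setOf_forall]
    refine MeasurableSet.iInter fun i => ?_
    rw [Set.setOf_forall]
    refine MeasurableSet.iInter fun i' => ?_
    by_cases h : i ≤ i'
    · simpa [h] using measurableSet_le ((measurable_pi_apply i).comp' measurable_fst)
        ((measurable_pi_apply i').comp' measurable_fst)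
    · simp [h]
  have m4 : MeasurableSet {p : (Fin (a + 1) → ℝ) × (Fin (b + 1) → ℝ) |
      ∀ i, p.1 i ≤ (d : ℝ) * p.2 (Fin.last b)} := by
    rw [Set.setOf_forall]
    exact MeasurableSet.iInter fun i =>
      measurableSet_le ((measurable_pi_apply i).comp' measurable_fst)
        (measurable_const.mul ((measurable_pi_apply (Fin.last b)).comp measurable_snd))
  exact m1.inter (m2.inter (m3.inter m4))

lemma Kprod_subset (a b d : ℕ) :
    Kprod a b d ⊆ (Prod.map (cumsum (a + 1)) (cumsum (b + 1))) ⁻¹' Stilde a b d := by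
  rintro ⟨x, y⟩ hp
  obtain ⟨h1, h2, h3, h4⟩ := hp
  have hb : ∑ i, x i ≤ (d : ℝ) * cumsum (b + 1) y (Fin.last b) := by
    rw [cumsum_last]; exact h4
  have hu := cumsum_mem h1 hb
  exact ⟨cumsum_mem h2 h3, hu.1, hu.2.1, hu.2.2⟩

lemma convex_Kprod_preimage (a b d : ℕ) :
    Convex ℝ (Gmap a b ⁻¹' Kprod a b d) := by
  intro x hx y hy s t hs ht hst
  simp only [Set.mem_preimage, Kprod, Set.mem_setOf_eq, Gmap] at hx hy ⊢
  have hc : ∀ idx, (s • x + t • y) idx = s * x idx + t * y idx := by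
    intro idx
    simp [PiLp.add_apply, PiLp.smul_apply, smul_eq_mul]
  obtain ⟨hx1, hx2, hx3, hx4⟩ := hx
  obtain ⟨hy1, hy2, hy3, hy4⟩ := hy
  refine ⟨fun i => ?_, fun j => ?_, ?_, ?_⟩
  · rw [hc]
    exact add_nonneg (mul_nonneg hs (hx1 i)) (mul_nonneg ht (hy1 i))
  · rw [hc]
    exact add_nonneg (mul_nonneg hs (hx2 j)) (mul_nonneg ht (hy2 j))
  · simp only [hc]
    rw [Finset.sum_add_distrib, ← Finset.mul_sum, ← Finset.mul_sum]
    have := add_le_add (mul_le_mul_of_nonneg_left hx3 hs) (mul_le_mul_of_nonneg_left hy3 ht)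
    linarith
  · simp only [hc]
    rw [Finset.sum_add_distrib, ← Finset.mul_sum, ← Finset.mul_sum,
      Finset.sum_add_distrib, ← Finset.mul_sum, ← Finset.mul_sum]
    calc s * ∑ i, x (Fin.castAdd (b + 1) i) + t * ∑ i, y (Fin.castAdd (b + 1) i)
        ≤ s * ((d : ℝ) * ∑ j, x (Fin.natAdd (a + 1) j))
          + t * ((d : ℝ) * ∑ j, y (Fin.natAdd (a + 1) j)) :=
          add_le_add (mul_le_mul_of_nonneg_left hx4 hs) (mul_le_mul_of_nonneg_left hy4 ht)
      _ = (d : ℝ) * (s * ∑ j, x (Fin.natAdd (a + 1) j) + t * ∑ j, y (Fin.natAdd (a + 1) j)) := by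
          ring

lemma Gmap_measurePreserving (a b : ℕ) :
    MeasurePreserving (Gmap a b) volume volume := by
  have hfun : (⇑(MeasurableEquiv.sumPiEquivProdPi (fun _ : Fin (a + 1) ⊕ Fin (b + 1) => ℝ)) ∘
      (⇑(MeasurableEquiv.piCongrLeft (fun _ : Fin (a + 1 + (b + 1)) => ℝ) finSumFinEquiv).symm ∘
       ⇑(MeasurableEquiv.toLp 2 (Fin (a + 1 + (b + 1)) → ℝ)).symm)) = Gmap a b := by
    rfl
  rw [← hfun]
  exact (volume_measurePreserving_sumPiEquivProdPi _).comp
    (((volume_measurePreserving_piCongrLeft _ finSumFinEquiv).symm _).comp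
      (EuclideanSpace.volume_preserving_symm_measurableEquiv_toLp _))

lemma volume_Stilde (a b d : ℕ) :
    volume (Stilde a b d) =
      ENNReal.ofReal ((d : ℝ) ^ (a + 1) / ((a.factorial * (a + 1) : ℕ) : ℝ)) *
        ENNReal.ofReal ((1 : ℝ) ^ (b + 1 + (a + 1)) / ((b.factorial * (b + 1 + (a + 1)) : ℕ) : ℝ)) := by
  rw [Measure.volume_eq_prod, Measure.prod_apply_symm (measurableSet_Stilde a b d)]
  have hslice : ∀ v : Fin (b + 1) → ℝ,
      volume ((fun u => (u, v)) ⁻¹' Stilde a b d) =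
        (Oset (b + 1) 1).indicator (fun v =>
          ENNReal.ofReal ((d : ℝ) ^ (a + 1) / ((a.factorial * (a + 1) : ℕ) : ℝ)) *
            ENNReal.ofReal ((v (Fin.last b)) ^ (a + 1))) v := by
    intro v
    by_cases hv : v ∈ Oset (b + 1) 1
    · have hset : (fun u => (u, v)) ⁻¹' Stilde a b d
          = Oset (a + 1) ((d : ℝ) * v (Fin.last b)) := by
        ext u
        constructor
        · rintro ⟨_, h2, h3, h4⟩; exact ⟨h2, h3, h4⟩
        · rintro ⟨h2, h3, h4⟩; exact ⟨hv, h2, h3, h4⟩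
      have hnn : (0 : ℝ) ≤ (d : ℝ) * v (Fin.last b) :=
        mul_nonneg (Nat.cast_nonneg d) (hv.1 _)
      rw [hset, volume_Oset a _ hnn, Set.indicator_of_mem hv,
        ← ENNReal.ofReal_mul (by positivity)]
      congr 1
      rw [mul_pow]
      ring
    · have hset : (fun u => (u, v)) ⁻¹' Stilde a b d = ∅ := by
        ext u
        simp only [Set.mem_preimage, Set.mem_empty_iff_false, iff_false]
        intro h
        exact hv h.1
      rw [hset, measure_empty, Set.indicator_of_notMem hv]
  rw [lintegral_congr hslice, lintegral_indicator (measurableSet_Oset _ _),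
    lintegral_const_mul _ (measurable_lastpow b (a + 1)),
    ← lintegral_indicator (measurableSet_Oset _ _),
    ordLintegral b (a + 1) 1 zero_le_one]

end Stmt5Aux

open Stmt5Aux

/-- Volume bound `(n+r)! · vol(Δ) ≤ C(n+r−1, r−1) · d^n` for the polytope `Δ`,
the convex hull of `{0} ∪ {e_{n+j}} ∪ {d·e_i + e_{n+j}}` in `ℝ^{n+r}`. -/
theorem stmt5 (n r d : ℕ) (hn : 1 ≤ n) (hr : 1 ≤ r) (hd : 1 ≤ d) :
    ((n + r).factorial : ENNReal) *
        volume (convexHull ℝ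
          (({0} : Set (EuclideanSpace ℝ (Fin (n + r)))) ∪
            (Set.range fun j : Fin r =>
              (EuclideanSpace.single (Fin.natAdd n j) (1 : ℝ) :
                EuclideanSpace ℝ (Fin (n + r)))) ∪
            (Set.range fun p : Fin n × Fin r =>
              ((d : ℝ) • EuclideanSpace.single (Fin.castAdd r p.1) (1 : ℝ) +
                  EuclideanSpace.single (Fin.natAdd n p.2) (1 : ℝ) :
                EuclideanSpace ℝ (Fin (n + r)))))) ≤
      (((n + r - 1).choose (r - 1) * d ^ n : ℕ) : ENNReal) := by
  obtain ⟨a, rfl⟩ : ∃ m, n = m + 1 := ⟨n - 1, by omega⟩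
  obtain ⟨b, rfl⟩ : ∃ m, r = m + 1 := ⟨r - 1, by omega⟩
  clear hn hr
  have hne : ∀ (i : Fin (a + 1)) (j : Fin (b + 1)),
      Fin.castAdd (b + 1) i ≠ Fin.natAdd (a + 1) j := by
    intro i j h
    have hv := congrArg Fin.val h
    have hi := i.isLt
    simp only [Fin.coe_castAdd, Fin.coe_natAdd] at hv
    omega
  have hnatiff : ∀ (j' j : Fin (b + 1)),
      (Fin.natAdd (a + 1) j' = Fin.natAdd (a + 1) j) ↔ j' = j := by
    intro j' j
    constructor
    · intro h
      have hv := congrArg Fin.val h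
      simp only [Fin.coe_natAdd] at hv
      exact Fin.ext (by omega)
    · rintro rfl; rfl
  have hcastiff : ∀ (i' i : Fin (a + 1)),
      (Fin.castAdd (b + 1) i' = Fin.castAdd (b + 1) i) ↔ i' = i := by
    intro i' i
    constructor
    · intro h
      have hv := congrArg Fin.val h
      simp only [Fin.coe_castAdd] at hv
      exact Fin.ext hv
    · rintro rfl; rfl
  have hsub : convexHull ℝ
      (({0} : Set (EuclideanSpace ℝ (Fin (a + 1 + (b + 1))))) ∪
        (Set.range fun j : Fin (b + 1) =>
          (EuclideanSpace.single (Fin.natAdd (a + 1) j) (1 : ℝ) :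
            EuclideanSpace ℝ (Fin (a + 1 + (b + 1))))) ∪
        (Set.range fun p : Fin (a + 1) × Fin (b + 1) =>
          ((d : ℝ) • EuclideanSpace.single (Fin.castAdd (b + 1) p.1) (1 : ℝ) +
              EuclideanSpace.single (Fin.natAdd (a + 1) p.2) (1 : ℝ) :
            EuclideanSpace ℝ (Fin (a + 1 + (b + 1))))))
      ⊆ Gmap a b ⁻¹' Kprod a b d := by
    apply convexHull_min _ (convex_Kprod_preimage a b d)
    refine Set.union_subset (Set.union_subset ?_ ?_) ?_
    · rw [Set.singleton_subset_iff, Set.mem_preimage]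
      have h0 : ∀ idx : Fin (a + 1 + (b + 1)),
          (0 : EuclideanSpace ℝ (Fin (a + 1 + (b + 1)))) idx = 0 := fun _ => rfl
      simp only [Gmap, Kprod, Set.mem_setOf_eq, h0]
      refine ⟨fun _ => le_refl _, fun _ => le_refl _, ?_, ?_⟩ <;> simp
    · rw [Set.range_subset_iff]
      intro j
      rw [Set.mem_preimage]
      have hval1 : ∀ i : Fin (a + 1),
          (EuclideanSpace.single (Fin.natAdd (a + 1) j) (1 : ℝ) :
            EuclideanSpace ℝ (Fin (a + 1 + (b + 1)))) (Fin.castAdd (b + 1) i) = 0 := by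
        intro i
        rw [EuclideanSpace.single_apply, if_neg (hne i j)]
      have hval2 : ∀ j' : Fin (b + 1),
          (EuclideanSpace.single (Fin.natAdd (a + 1) j) (1 : ℝ) :
            EuclideanSpace ℝ (Fin (a + 1 + (b + 1)))) (Fin.natAdd (a + 1) j')
            = if j' = j then 1 else 0 := by
        intro j'
        rw [EuclideanSpace.single_apply]
        simp [hnatiff j' j]
      simp only [Gmap, Kprod, Set.mem_setOf_eq, hval1, hval2]
      refine ⟨fun _ => le_refl _, fun j' => ?_, ?_, ?_⟩
      · split_ifs <;> norm_num
      · rw [Finset.sum_ite_eq' Finset.univ j (fun _ => (1 : ℝ))]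
        simp
      · rw [Finset.sum_const_zero, Finset.sum_ite_eq' Finset.univ j (fun _ => (1 : ℝ))]
        simp
    · rw [Set.range_subset_iff]
      intro p
      rw [Set.mem_preimage]
      have hval : ∀ idx : Fin (a + 1 + (b + 1)),
          ((d : ℝ) • EuclideanSpace.single (Fin.castAdd (b + 1) p.1) (1 : ℝ) +
            EuclideanSpace.single (Fin.natAdd (a + 1) p.2) (1 : ℝ) :
            EuclideanSpace ℝ (Fin (a + 1 + (b + 1)))) idx
          = (d : ℝ) * (if idx = Fin.castAdd (b + 1) p.1 then 1 else 0)
            + (if idx = Fin.natAdd (a + 1) p.2 then 1 else 0) := by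
        intro idx
        simp [PiLp.add_apply, PiLp.smul_apply, smul_eq_mul, EuclideanSpace.single_apply]
      have hval1 : ∀ i' : Fin (a + 1),
          ((d : ℝ) • EuclideanSpace.single (Fin.castAdd (b + 1) p.1) (1 : ℝ) +
            EuclideanSpace.single (Fin.natAdd (a + 1) p.2) (1 : ℝ) :
            EuclideanSpace ℝ (Fin (a + 1 + (b + 1)))) (Fin.castAdd (b + 1) i')
          = (d : ℝ) * (if i' = p.1 then 1 else 0) := by
        intro i'
        rw [hval, if_neg (hne i' p.2)]
        simp [hcastiff i' p.1]
      have hval2 : ∀ j' : Fin (b + 1),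
          ((d : ℝ) • EuclideanSpace.single (Fin.castAdd (b + 1) p.1) (1 : ℝ) +
            EuclideanSpace.single (Fin.natAdd (a + 1) p.2) (1 : ℝ) :
            EuclideanSpace ℝ (Fin (a + 1 + (b + 1)))) (Fin.natAdd (a + 1) j')
          = if j' = p.2 then 1 else 0 := by
        intro j'
        rw [hval, if_neg (Ne.symm (hne p.1 j'))]
        simp [hnatiff j' p.2]
      simp only [Gmap, Kprod, Set.mem_setOf_eq, hval1, hval2]
      refine ⟨fun i' => ?_, fun j' => ?_, ?_, ?_⟩
      · split_ifs <;> simp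
      · split_ifs <;> norm_num
      · rw [Finset.sum_ite_eq' Finset.univ p.2 (fun _ => (1 : ℝ))]
        simp
      · rw [← Finset.mul_sum, Finset.sum_ite_eq' Finset.univ p.1 (fun _ => (1 : ℝ)),
          Finset.sum_ite_eq' Finset.univ p.2 (fun _ => (1 : ℝ))]
        simp
  have hcs : MeasurePreserving (Prod.map (cumsum (a + 1)) (cumsum (b + 1)))
      (volume : Measure ((Fin (a + 1) → ℝ) × (Fin (b + 1) → ℝ))) volume := by
    have h := (cumsum_measurePreserving (a + 1)).prod (cumsum_measurePreserving (b + 1))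
    rwa [← Measure.volume_eq_prod] at h
  have hΔ : volume (convexHull ℝ
      (({0} : Set (EuclideanSpace ℝ (Fin (a + 1 + (b + 1))))) ∪
        (Set.range fun j : Fin (b + 1) =>
          (EuclideanSpace.single (Fin.natAdd (a + 1) j) (1 : ℝ) :
            EuclideanSpace ℝ (Fin (a + 1 + (b + 1))))) ∪
        (Set.range fun p : Fin (a + 1) × Fin (b + 1) =>
          ((d : ℝ) • EuclideanSpace.single (Fin.castAdd (b + 1) p.1) (1 : ℝ) +
              EuclideanSpace.single (Fin.natAdd (a + 1) p.2) (1 : ℝ) :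
            EuclideanSpace ℝ (Fin (a + 1 + (b + 1)))))))
      ≤ ENNReal.ofReal ((d : ℝ) ^ (a + 1) / ((a.factorial * (a + 1) : ℕ) : ℝ)) *
          ENNReal.ofReal ((1 : ℝ) ^ (b + 1 + (a + 1)) /
            ((b.factorial * (b + 1 + (a + 1)) : ℕ) : ℝ)) := by
    calc volume (convexHull ℝ _) ≤ volume (Gmap a b ⁻¹' Kprod a b d) := measure_mono hsub
      _ = volume (Kprod a b d) :=
          (Gmap_measurePreserving a b).measure_preimage
            (measurableSet_Kprod a b d).nullMeasurableSet
      _ ≤ volume ((Prod.map (cumsum (a + 1)) (cumsum (b + 1))) ⁻¹' Stilde a b d) :=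
          measure_mono (Kprod_subset a b d)
      _ = volume (Stilde a b d) :=
          hcs.measure_preimage (measurableSet_Stilde a b d).nullMeasurableSet
      _ = _ := volume_Stilde a b d
  calc ((a + 1 + (b + 1)).factorial : ENNReal) * volume (convexHull ℝ _)
      ≤ ((a + 1 + (b + 1)).factorial : ENNReal) *
        (ENNReal.ofReal ((d : ℝ) ^ (a + 1) / ((a.factorial * (a + 1) : ℕ) : ℝ)) *
          ENNReal.ofReal ((1 : ℝ) ^ (b + 1 + (a + 1)) /
            ((b.factorial * (b + 1 + (a + 1)) : ℕ) : ℝ))) := mul_le_mul_right hΔ _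
    _ = (((a + 1 + (b + 1) - 1).choose (b + 1 - 1) * d ^ (a + 1) : ℕ) : ENNReal) := by
        have e1 : a + 1 + (b + 1) - 1 = a + b + 1 := by omega
        have e2 : b + 1 - 1 = b := by omega
        rw [e1, e2]
        have h1 := Nat.choose_mul_factorial_mul_factorial (show b ≤ a + b + 1 by omega)
        have h2 : a + b + 1 - b = a + 1 := by omega
        rw [h2] at h1
        have hN : (a + 1 + (b + 1)).factorial
            = (a + b + 1).choose b * (a.factorial * (a + 1)) * (b.factorial * (b + 1 + (a + 1))) := by
          have h3 : a + 1 + (b + 1) = (a + b + 1) + 1 := by omega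
          rw [h3, Nat.factorial_succ, ← h1, Nat.factorial_succ]
          ring
        have hCa : (0 : ℝ) ≤ (d : ℝ) ^ (a + 1) / ((a.factorial * (a + 1) : ℕ) : ℝ) := by
          positivity
        have hF : (0 : ℝ) ≤ ((a + 1 + (b + 1)).factorial : ℝ) := by positivity
        rw [← ENNReal.ofReal_natCast ((a + 1 + (b + 1)).factorial),
          ← ENNReal.ofReal_mul hCa, ← ENNReal.ofReal_mul hF,
          ← ENNReal.ofReal_natCast ((a + b + 1).choose b * d ^ (a + 1))]
        congr 1
        have h4 : (a.factorial : ℝ) ≠ 0 := by positivity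
        have h5 : ((a : ℝ) + 1) ≠ 0 := by positivity
        have h6 : (b.factorial : ℝ) ≠ 0 := by positivity
        have h7 : ((b : ℝ) + 1 + ((a : ℝ) + 1)) ≠ 0 := by positivity
        rw [hN]
        push_cast
        rw [one_pow]
        field_simp
end

section
/- Let n, r, d be positive integers. Work in Euclidean space ℝ^{n+r} with standard orthonormal basis e_1, …, e_{n+r}, and let Δ′ ⊂ ℝ^{n+r} be the convex hull of the finite set {0, d·e_1, …, d·e_n} ∪ {e_{n+j} : 1 ≤ j ≤ r} ∪ {d·e_i + e_{n+j} : 1 ≤ i ≤ n, 1 ≤ j ≤ r}. Then (n+r)! · vol(Δ′) ≤ C(n+r, r) · d^n, where vol denotes Lebesgue measure on ℝ^{n+r}. -/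
open MeasureTheory Finset

lemma simplex_vol (m : ℕ) : ∀ c : ℝ,
    volume {x : Fin m → ℝ | (∀ i, 0 ≤ x i) ∧ ∑ i, x i ≤ c}
      ≤ ENNReal.ofReal (c ^ m / m.factorial) := by
  induction m with
  | zero =>
    intro c
    rcases le_or_gt 0 c with hc | hc
    · simp only [pow_zero, Nat.factorial_zero, Nat.cast_one, div_one, ENNReal.ofReal_one]
      have : {x : Fin 0 → ℝ | (∀ i, 0 ≤ x i) ∧ ∑ i, x i ≤ c} ⊆ Set.univ := Set.subset_univ _
      calc volume {x : Fin 0 → ℝ | (∀ i, 0 ≤ x i) ∧ ∑ i, x i ≤ c}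
          ≤ volume (Set.univ : Set (Fin 0 → ℝ)) := measure_mono this
        _ = 1 := by simp [MeasureTheory.volume_pi, Measure.pi_univ]
    · have h0 : {x : Fin 0 → ℝ | (∀ i, 0 ≤ x i) ∧ ∑ i, x i ≤ c} = ∅ := by
        ext x; simp [not_le.mpr hc]
      rw [h0]; simp
  | succ m ih =>
    intro c
    rcases lt_or_ge c 0 with hc | hc
    · have : {x : Fin (m+1) → ℝ | (∀ i, 0 ≤ x i) ∧ ∑ i, x i ≤ c} = ∅ := by
        ext x
        simp only [Set.mem_setOf_eq, Set.mem_empty_iff_false, iff_false, not_and]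
        intro h h2; linarith [Finset.sum_nonneg (fun i (_ : i ∈ Finset.univ) => h i)]
      simp [this]
    set T : Set (ℝ × (Fin m → ℝ)) :=
      {p | 0 ≤ p.1 ∧ (∀ i, 0 ≤ p.2 i) ∧ p.1 + ∑ i, p.2 i ≤ c} with hT
    have hTm : MeasurableSet T := by
      have h2 : {p : ℝ × (Fin m → ℝ) | ∀ i, 0 ≤ p.2 i} = ⋂ i, {p | 0 ≤ p.2 i} := by
        ext p; simp
      have : T = {p : ℝ × (Fin m → ℝ) | 0 ≤ p.1} ∩ ({p | ∀ i, 0 ≤ p.2 i} ∩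
          {p | p.1 + ∑ i, p.2 i ≤ c}) := by
        ext p; simp [hT, and_assoc]
      rw [this, h2]
      refine (measurableSet_le measurable_const measurable_fst).inter
        ((MeasurableSet.iInter fun i => measurableSet_le measurable_const
          ((measurable_pi_apply i).comp measurable_snd)).inter
          (measurableSet_le (measurable_fst.add <| Finset.measurable_sum _ fun i _ =>
            (measurable_pi_apply i).comp measurable_snd) measurable_const))
    have key : volume {x : Fin (m+1) → ℝ | (∀ i, 0 ≤ x i) ∧ ∑ i, x i ≤ c}
        = (volume : Measure (ℝ × (Fin m → ℝ))) T := by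
      have hmp := MeasureTheory.volume_preserving_piFinSuccAbove
        (fun _ : Fin (m+1) => ℝ) 0
      rw [← hmp.map_eq, MeasurableEquiv.map_apply]
      congr 1
      ext x
      simp only [Set.mem_preimage, hT, Set.mem_setOf_eq, MeasurableEquiv.piFinSuccAbove,
        MeasurableEquiv.coe_mk, Fin.insertNthEquiv, Equiv.coe_fn_symm_mk,
        Fin.removeNth_zero, Fin.tail_def, Fin.sum_univ_succ]
      constructor
      · rintro ⟨h1, h2⟩
        exact ⟨h1 0, fun i => h1 _, h2⟩
      · rintro ⟨h0, h1, h2⟩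
        refine ⟨fun i => ?_, h2⟩
        rcases Fin.eq_zero_or_eq_succ i with h | ⟨j, rfl⟩
        · exact h ▸ h0
        · exact h1 j
    rw [key, Measure.volume_eq_prod, Measure.prod_apply hTm]
    have hb : ∀ t : ℝ, volume (Prod.mk t ⁻¹' T)
        ≤ (Set.Icc 0 c).indicator (fun t => ENNReal.ofReal ((c - t) ^ m / m.factorial)) t := by
      intro t
      rcases le_or_gt 0 t with ht0 | ht0
      · rcases le_or_gt t c with htc | htc
        · rw [Set.indicator_of_mem (Set.mem_Icc.mpr ⟨ht0, htc⟩)]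
          refine le_trans (measure_mono ?_) (ih (c - t))
          intro y hy
          simp only [Set.mem_preimage, hT, Set.mem_setOf_eq] at hy ⊢
          exact ⟨hy.2.1, by linarith [hy.2.2]⟩
        · have he : Prod.mk t ⁻¹' T = ∅ := by
            ext y
            simp only [Set.mem_preimage, hT, Set.mem_setOf_eq, Set.mem_empty_iff_false, iff_false,
              not_and]
            intro _ h1 h2
            have := Finset.sum_nonneg fun i (_ : i ∈ Finset.univ) => h1 i
            linarith
          simp [he]
      · have he : Prod.mk t ⁻¹' T = ∅ := by
          ext y
          simp only [Set.mem_preimage, hT, Set.mem_setOf_eq, Set.mem_empty_iff_false, iff_false,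
            not_and]
          intro h; linarith
        simp [he]
    calc ∫⁻ t, volume (Prod.mk t ⁻¹' T) ≤ ∫⁻ t, (Set.Icc 0 c).indicator
          (fun t => ENNReal.ofReal ((c - t) ^ m / m.factorial)) t := lintegral_mono hb
      _ = ∫⁻ t in Set.Icc 0 c, ENNReal.ofReal ((c - t) ^ m / m.factorial) :=
          lintegral_indicator measurableSet_Icc _
      _ = ENNReal.ofReal (∫ t in Set.Icc 0 c, (c - t) ^ m / m.factorial) := by
          rw [← ofReal_integral_eq_lintegral_ofReal]
          · exact Continuous.integrableOn_Icc (by continuity)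
          · filter_upwards [ae_restrict_mem measurableSet_Icc] with t ht
            have h1 : 0 ≤ (c - t) ^ m := pow_nonneg (by linarith [ht.2]) m
            positivity
      _ = ENNReal.ofReal (c ^ (m + 1) / (m + 1).factorial) := by
          congr 1
          rw [MeasureTheory.integral_Icc_eq_integral_Ioc,
            ← intervalIntegral.integral_of_le hc]
          have h2 : ∫ t in (0:ℝ)..c, (c - t) ^ m / m.factorial
              = (∫ t in (0:ℝ)..c, (c - t) ^ m) / m.factorial := by
            simp [intervalIntegral.integral_div]
          rw [h2, intervalIntegral.integral_comp_sub_left (fun x => x ^ m) c]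
          simp only [sub_zero, sub_self, integral_pow]
          rw [zero_pow (Nat.succ_ne_zero m), Nat.factorial_succ]
          push_cast
          field_simp
          ring

lemma W_vol (n r : ℕ) (a b : ℝ) :
    volume {x : Fin (n + r) → ℝ | (∀ k, 0 ≤ x k) ∧
        (∑ i : Fin n, x (Fin.castAdd r i)) ≤ a ∧ (∑ j : Fin r, x (Fin.natAdd n j)) ≤ b}
      = volume {y : Fin n → ℝ | (∀ i, 0 ≤ y i) ∧ ∑ i, y i ≤ a} *
        volume {y : Fin r → ℝ | (∀ i, 0 ≤ y i) ∧ ∑ i, y i ≤ b} := by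
  have e1 := MeasureTheory.volume_measurePreserving_piCongrLeft (fun _ : Fin (n+r) => ℝ)
    finSumFinEquiv
  rw [← e1.map_eq, MeasurableEquiv.map_apply]
  have hpre : (MeasurableEquiv.piCongrLeft (fun _ : Fin (n+r) => ℝ) finSumFinEquiv) ⁻¹'
      {x : Fin (n + r) → ℝ | (∀ k, 0 ≤ x k) ∧
        (∑ i : Fin n, x (Fin.castAdd r i)) ≤ a ∧ (∑ j : Fin r, x (Fin.natAdd n j)) ≤ b}
      = (MeasurableEquiv.sumPiEquivProdPi fun _ : Fin n ⊕ Fin r => ℝ) ⁻¹'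
        ({y : Fin n → ℝ | (∀ i, 0 ≤ y i) ∧ ∑ i, y i ≤ a} ×ˢ
          {y : Fin r → ℝ | (∀ i, 0 ≤ y i) ∧ ∑ i, y i ≤ b}) := by
    ext y
    have happ : ∀ s : Fin n ⊕ Fin r,
        (MeasurableEquiv.piCongrLeft (fun _ : Fin (n+r) => ℝ) finSumFinEquiv) y
          (finSumFinEquiv s) = y s :=
      fun s => MeasurableEquiv.piCongrLeft_apply_apply (β := fun _ => ℝ) finSumFinEquiv y s
    have hl : ∀ i : Fin n,
        (MeasurableEquiv.piCongrLeft (fun _ : Fin (n+r) => ℝ) finSumFinEquiv) y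
          (Fin.castAdd r i) = y (Sum.inl i) := fun i => by
      rw [← finSumFinEquiv_apply_left, happ]
    have hr : ∀ j : Fin r,
        (MeasurableEquiv.piCongrLeft (fun _ : Fin (n+r) => ℝ) finSumFinEquiv) y
          (Fin.natAdd n j) = y (Sum.inr j) := fun j => by
      rw [← finSumFinEquiv_apply_right, happ]
    simp only [Set.mem_preimage, Set.mem_setOf_eq, Set.mem_prod,
      MeasurableEquiv.coe_sumPiEquivProdPi, Equiv.sumPiEquivProdPi]
    rw [Finset.sum_congr rfl fun i _ => hl i, Finset.sum_congr rfl fun j _ => hr j]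
    constructor
    · rintro ⟨h0, h1, h2⟩
      refine ⟨⟨fun i => ?_, h1⟩, ⟨fun j => ?_, h2⟩⟩
      · show (0:ℝ) ≤ y (Sum.inl i); rw [← hl i]; exact h0 _
      · show (0:ℝ) ≤ y (Sum.inr j); rw [← hr j]; exact h0 _
    · rintro ⟨⟨h0l, h1⟩, ⟨h0r, h2⟩⟩
      replace h0l : ∀ i, (0:ℝ) ≤ y (Sum.inl i) := h0l
      replace h0r : ∀ j, (0:ℝ) ≤ y (Sum.inr j) := h0r
      refine ⟨fun k => ?_, h1, h2⟩
      have := happ (finSumFinEquiv.symm k)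
      rw [Equiv.apply_symm_apply] at this
      rw [this]
      rcases finSumFinEquiv.symm k with i | j
      · exact h0l i
      · exact h0r j
  rw [hpre, ← MeasurableEquiv.map_apply,
    (MeasureTheory.volume_measurePreserving_sumPiEquivProdPi fun _ : Fin n ⊕ Fin r => ℝ).map_eq,
    Measure.volume_eq_prod, Measure.prod_prod]


/-- Volume bound `(n+r)! · vol(Δ′) ≤ C(n+r, r) · d^n` for the polytope `Δ′`,
the convex hull of `{0, d·e₁, …, d·e_n} ∪ {e_{n+j}} ∪ {d·e_i + e_{n+j}}` in `ℝ^{n+r}`. -/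
theorem stmt7 (n r d : ℕ) (hn : 1 ≤ n) (hr : 1 ≤ r) (hd : 1 ≤ d) :
    ((n + r).factorial : ENNReal) *
        volume (convexHull ℝ
          (({0} : Set (EuclideanSpace ℝ (Fin (n + r)))) ∪
            (Set.range fun i : Fin n =>
              ((d : ℝ) • EuclideanSpace.single (Fin.castAdd r i) (1 : ℝ) :
                EuclideanSpace ℝ (Fin (n + r)))) ∪
            (Set.range fun j : Fin r =>
              (EuclideanSpace.single (Fin.natAdd n j) (1 : ℝ) :
                EuclideanSpace ℝ (Fin (n + r)))) ∪
            (Set.range fun p : Fin n × Fin r =>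
              ((d : ℝ) • EuclideanSpace.single (Fin.castAdd r p.1) (1 : ℝ) +
                  EuclideanSpace.single (Fin.natAdd n p.2) (1 : ℝ) :
                EuclideanSpace ℝ (Fin (n + r)))))) ≤
      (((n + r).choose r * d ^ n : ℕ) : ENNReal) := by
  have hd0 : (0:ℝ) ≤ d := Nat.cast_nonneg d
  set W : Set (EuclideanSpace ℝ (Fin (n + r))) :=
    {x | (∀ k, 0 ≤ x k) ∧ (∑ i : Fin n, x (Fin.castAdd r i)) ≤ (d:ℝ) ∧
      (∑ j : Fin r, x (Fin.natAdd n j)) ≤ 1} with hW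
  -- W is convex
  have hWconv : Convex ℝ W := by
    intro x hx y hy a b ha hb hab
    rw [hW, Set.mem_setOf_eq] at hx hy ⊢
    have happ : ∀ k, (a • x + b • y) k = a * x k + b * y k := fun k => rfl
    refine ⟨fun k => by
        rw [happ]; exact add_nonneg (mul_nonneg ha (hx.1 k)) (mul_nonneg hb (hy.1 k)), ?_, ?_⟩
    · calc ∑ i : Fin n, (a • x + b • y) (Fin.castAdd r i)
          = a * ∑ i : Fin n, x (Fin.castAdd r i) + b * ∑ i : Fin n, y (Fin.castAdd r i) := by
            simp only [happ]; rw [Finset.sum_add_distrib, Finset.mul_sum, Finset.mul_sum]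
        _ ≤ a * d + b * d := add_le_add (mul_le_mul_of_nonneg_left hx.2.1 ha)
            (mul_le_mul_of_nonneg_left hy.2.1 hb)
        _ = (d:ℝ) := by rw [← add_mul, hab, one_mul]
    · calc ∑ j : Fin r, (a • x + b • y) (Fin.natAdd n j)
          = a * ∑ j : Fin r, x (Fin.natAdd n j) + b * ∑ j : Fin r, y (Fin.natAdd n j) := by
            simp only [happ]; rw [Finset.sum_add_distrib, Finset.mul_sum, Finset.mul_sum]
        _ ≤ a * 1 + b * 1 := add_le_add (mul_le_mul_of_nonneg_left hx.2.2 ha)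
            (mul_le_mul_of_nonneg_left hy.2.2 hb)
        _ = (1:ℝ) := by rw [← add_mul, hab, one_mul]
  -- auxiliary coordinate computations
  have hne : ∀ (i : Fin n) (j : Fin r), Fin.natAdd n j ≠ Fin.castAdd r i := by
    intro i j h
    have := congrArg Fin.val h
    simp only [Fin.coe_natAdd, Fin.coe_castAdd] at this
    omega
  have hnat : ∀ (j j' : Fin r), Fin.natAdd n j = Fin.natAdd n j' ↔ j = j' := fun j j' => by
    constructor
    · intro h
      have := congrArg Fin.val h
      simp only [Fin.coe_natAdd] at this
      exact Fin.ext (by omega)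
    · rintro rfl; rfl
  -- the generators lie in W
  have hsub : (({0} : Set (EuclideanSpace ℝ (Fin (n + r)))) ∪
      (Set.range fun i : Fin n =>
        ((d : ℝ) • EuclideanSpace.single (Fin.castAdd r i) (1 : ℝ) :
          EuclideanSpace ℝ (Fin (n + r)))) ∪
      (Set.range fun j : Fin r =>
        (EuclideanSpace.single (Fin.natAdd n j) (1 : ℝ) :
          EuclideanSpace ℝ (Fin (n + r)))) ∪
      (Set.range fun p : Fin n × Fin r =>
        ((d : ℝ) • EuclideanSpace.single (Fin.castAdd r p.1) (1 : ℝ) +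
            EuclideanSpace.single (Fin.natAdd n p.2) (1 : ℝ) :
          EuclideanSpace ℝ (Fin (n + r))))) ⊆ W := by
    intro x hx
    rcases hx with ((hx | hx) | hx) | hx
    · rcases hx with rfl
      refine ⟨fun k => le_refl _, by simp [hd0], by simp⟩
    · obtain ⟨i0, rfl⟩ := hx
      refine ⟨fun k => ?_, ?_, ?_⟩
      · simp only [PiLp.smul_apply, EuclideanSpace.single_apply, smul_eq_mul]
        split <;> simp [hd0]
      · simp [EuclideanSpace.single_apply, mul_ite, Fin.castAdd_inj]
      · simp [EuclideanSpace.single_apply, mul_ite, hne]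
    · obtain ⟨j0, rfl⟩ := hx
      refine ⟨fun k => ?_, ?_, ?_⟩
      · simp only [EuclideanSpace.single_apply]
        split <;> simp
      · simp [EuclideanSpace.single_apply, fun i => (hne i j0).symm, hd0]
      · simp [EuclideanSpace.single_apply, hnat]
    · obtain ⟨⟨i0, j0⟩, rfl⟩ := hx
      refine ⟨fun k => ?_, ?_, ?_⟩
      · simp only [PiLp.add_apply, PiLp.smul_apply, EuclideanSpace.single_apply, smul_eq_mul]
        have h1 : (0:ℝ) ≤ (d:ℝ) * if k = Fin.castAdd r i0 then 1 else 0 := by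
          split <;> simp [hd0]
        have h2 : (0:ℝ) ≤ if k = Fin.natAdd n j0 then (1:ℝ) else 0 := by split <;> simp
        linarith
      · simp [EuclideanSpace.single_apply, mul_ite, Fin.castAdd_inj,
          fun i => (hne i j0).symm, Finset.sum_add_distrib]
      · simp [EuclideanSpace.single_apply, mul_ite, hnat, hne,
          Finset.sum_add_distrib]
  have hhull := convexHull_min hsub hWconv
  -- relate the volume of W to the pi-space volume
  have hWvol : volume W = volume {y : Fin n → ℝ | (∀ i, 0 ≤ y i) ∧ ∑ i, y i ≤ (d:ℝ)} *
      volume {y : Fin r → ℝ | (∀ i, 0 ≤ y i) ∧ ∑ i, y i ≤ (1:ℝ)} := by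
    rw [← W_vol n r (d:ℝ) 1]
    have hE := EuclideanSpace.volume_preserving_symm_measurableEquiv_toLp (ι := Fin (n + r))
    rw [← hE.map_eq, MeasurableEquiv.map_apply]
    congr 1
  calc ((n + r).factorial : ENNReal) * volume (convexHull ℝ _)
      ≤ ((n + r).factorial : ENNReal) * volume W :=
        mul_le_mul_right (measure_mono hhull) _
    _ = ((n + r).factorial : ENNReal) *
        (volume {y : Fin n → ℝ | (∀ i, 0 ≤ y i) ∧ ∑ i, y i ≤ (d:ℝ)} *
         volume {y : Fin r → ℝ | (∀ i, 0 ≤ y i) ∧ ∑ i, y i ≤ (1:ℝ)}) := by rw [hWvol]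
    _ ≤ ((n + r).factorial : ENNReal) *
        (ENNReal.ofReal ((d:ℝ) ^ n / n.factorial) * ENNReal.ofReal ((1:ℝ) ^ r / r.factorial)) := by
        gcongr
        · exact simplex_vol n (d:ℝ)
        · exact simplex_vol r 1
    _ = (((n + r).choose r * d ^ n : ℕ) : ENNReal) := by
        rw [← ENNReal.ofReal_mul (by positivity), ← ENNReal.ofReal_natCast,
          ← ENNReal.ofReal_mul (by positivity), ← ENNReal.ofReal_natCast]
        congr 1
        have hfac : ((n + r).factorial : ℝ)
            = (n + r).choose r * r.factorial * n.factorial := by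
          rw_mod_cast [← Nat.choose_mul_factorial_mul_factorial (Nat.le_add_left r n)]
          congr 2
          omega
        rw [hfac]
        have h1 : (n.factorial : ℝ) ≠ 0 := Nat.cast_ne_zero.mpr n.factorial_ne_zero
        have h2 : (r.factorial : ℝ) ≠ 0 := Nat.cast_ne_zero.mpr r.factorial_ne_zero
        push_cast
        field_simp
        ring
end
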